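/- arXiv:2603.12619 — 4 statements merged into one kernel-verified Lean document; each statement's English description precedes it below -/
import Mathlib

section
/- Let S ≥ 1, n ≥ 1, σ > 0, let P be an n×n positive semidefinite Hermitian complex matrix, and let u : Fin S → ℝ. Suppose ξ(i,j) = 2 · det(I + (1/(2σ²n))·P) · 2^(u(i) + u(j) − n) for all i, j. Define I_SPIM := log2(S/2) − (1/S)·Σ_{i} log2( Σ_{j} ξ(i,j)⁻¹ ), I_FD := log2( det(I + (1/(σ²n))·P) ), and τ := (1/S)·log2( Π_{i} Σ_{j} 2^(−(u(i)+u(j))) ). Then I_SPIM − I_FD ≥ log2 S − 2n − τ. (This is Theorem 1 of the paper, relating the SPIM hybrid-beamforming spectral efficiency to the fully-digital spectral efficiency, with the constants as they follow from the determinant inequality det(2I + X) ≥ 1 + det(I + X).) -/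
open scoped ComplexOrder

open Matrix in
lemma det_re_one_add_smul {n : ℕ} (P : Matrix (Fin n) (Fin n) ℂ) (hP : P.IsHermitian) (b : ℝ) :
    (((1 : Matrix (Fin n) (Fin n) ℂ) + ((b : ℝ) : ℂ) • P).det).re
      = ∏ i, (1 + b * hP.eigenvalues i) := by
  have hU : (hP.eigenvectorUnitary : Matrix (Fin n) (Fin n) ℂ)
      * star (hP.eigenvectorUnitary : Matrix (Fin n) (Fin n) ℂ) = 1 :=
    Matrix.mem_unitaryGroup_iff.mp hP.eigenvectorUnitary.2
  set U : Matrix (Fin n) (Fin n) ℂ := (hP.eigenvectorUnitary : Matrix (Fin n) (Fin n) ℂ) with hUdef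
  set D : Matrix (Fin n) (Fin n) ℂ := diagonal (RCLike.ofReal ∘ hP.eigenvalues) with hDdef
  have key : U * ((1 : Matrix (Fin n) (Fin n) ℂ) + ((b:ℝ):ℂ) • D) * star U
      = (1 : Matrix (Fin n) (Fin n) ℂ) + ((b:ℝ):ℂ) • P := by
    rw [Matrix.mul_add, Matrix.add_mul, Matrix.mul_one, hU,
      Matrix.mul_smul, Matrix.smul_mul, ← Unitary.conjStarAlgAut_apply (S := ℂ), ← hP.spectral_theorem]
  have hdiag : (1 : Matrix (Fin n) (Fin n) ℂ) + ((b:ℝ):ℂ) • D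
      = diagonal (fun i => ((1 + b * hP.eigenvalues i : ℝ) : ℂ)) := by
    rw [hDdef, ← Matrix.diagonal_one, ← Matrix.diagonal_smul, Matrix.diagonal_add]
    funext i
    simp only [Pi.add_apply, Pi.smul_apply, Pi.one_apply, Function.comp_apply, smul_eq_mul]
    push_cast
    rfl
  rw [← key, Matrix.det_mul, Matrix.det_mul, mul_comm U.det, mul_assoc, ← Matrix.det_mul, hU,
    Matrix.det_one, mul_one, hdiag, Matrix.det_diagonal, ← Complex.ofReal_prod,
    Complex.ofReal_re]

/-- Theorem 1: `I_SPIM − I_FD ≥ log2 S − 2n − τ`. -/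
theorem stmt3 (S n : ℕ) (hS : 1 ≤ S) (hn : 1 ≤ n) (σ : ℝ) (hσ : 0 < σ)
    (P : Matrix (Fin n) (Fin n) ℂ) (hP : P.PosSemidef)
    (u : Fin S → ℝ) (ξ : Fin S → Fin S → ℝ)
    (hξ : ∀ i j, ξ i j
      = 2 * (((1 : Matrix (Fin n) (Fin n) ℂ) + (2 * (σ : ℂ) ^ 2 * (n : ℂ))⁻¹ • P).det).re
          * (2 : ℝ) ^ (u i + u j - (n : ℝ))) :
    (Real.logb 2 ((S : ℝ) / 2) - (1 / (S : ℝ)) * ∑ i, Real.logb 2 (∑ j, (ξ i j)⁻¹))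
      - Real.logb 2 ((((1 : Matrix (Fin n) (Fin n) ℂ) + ((σ : ℂ) ^ 2 * (n : ℂ))⁻¹ • P).det).re)
    ≥ Real.logb 2 (S : ℝ) - 2 * (n : ℝ)
        - (1 / (S : ℝ)) * Real.logb 2 (∏ i, ∑ j, (2 : ℝ) ^ (-(u i + u j))) := by
  have h2 : (1:ℝ) < 2 := one_lt_two
  have hn0 : (0:ℝ) < (n:ℝ) := by exact_mod_cast hn
  have hS0 : (0:ℝ) < (S:ℝ) := by exact_mod_cast hS
  have hμ0 : ∀ i, 0 ≤ hP.1.eigenvalues i := fun i => hP.eigenvalues_nonneg i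
  set μ : Fin n → ℝ := hP.1.eigenvalues with hμ
  have hσn : (0:ℝ) < σ^2 * n := by positivity
  set c : ℝ := (σ^2 * (n:ℝ))⁻¹ with hc
  have hc0 : 0 < c := inv_pos.mpr hσn
  have hcast1 : ((σ:ℂ)^2 * (n:ℂ))⁻¹ = ((c:ℝ):ℂ) := by
    rw [hc]; push_cast; ring
  have hcast2 : (2 * (σ:ℂ)^2 * (n:ℂ))⁻¹ = ((c/2 : ℝ):ℂ) := by
    rw [hc]; push_cast
    rw [mul_inv, mul_inv, mul_inv]
    ring
  have hd2 : (((1 : Matrix (Fin n) (Fin n) ℂ) + (2 * (σ:ℂ)^2*(n:ℂ))⁻¹ • P).det).re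
      = ∏ i, (1 + (c/2) * μ i) := by
    rw [hcast2]; exact det_re_one_add_smul P hP.1 (c/2)
  have hd1 : (((1 : Matrix (Fin n) (Fin n) ℂ) + ((σ:ℂ)^2*(n:ℂ))⁻¹ • P).det).re
      = ∏ i, (1 + c * μ i) := by
    rw [hcast1]; exact det_re_one_add_smul P hP.1 c
  set d : ℝ := ∏ i, (1 + (c/2) * μ i) with hd
  set D1 : ℝ := ∏ i, (1 + c * μ i) with hD1
  have hfac2 : ∀ i, (0:ℝ) < 1 + (c/2) * μ i := fun i => by
    have := mul_nonneg (by linarith : (0:ℝ) ≤ c/2) (hμ0 i); linarith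
  have hfac1 : ∀ i, (0:ℝ) < 1 + c * μ i := fun i => by
    have := mul_nonneg hc0.le (hμ0 i); linarith
  have hd0 : 0 < d := Finset.prod_pos fun i _ => hfac2 i
  have hD10 : 0 < D1 := Finset.prod_pos fun i _ => hfac1 i
  have hpow : (2:ℝ)^(n:ℕ) * d = ∏ i, (2 + c * μ i) := by
    rw [hd, show ((2:ℝ)^(n:ℕ) = ∏ _i : Fin n, (2:ℝ)) by simp, ← Finset.prod_mul_distrib]
    exact Finset.prod_congr rfl fun i _ => by ring
  have hkey : D1 ≤ (2:ℝ)^(n:ℕ) * d := by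
    rw [hpow, hD1]
    exact Finset.prod_le_prod (fun i _ => (hfac1 i).le) (fun i _ => by linarith)
  have hlog : Real.logb 2 D1 ≤ (n:ℝ) + Real.logb 2 d := by
    have h1 := Real.logb_le_logb_of_le h2 hD10 hkey
    have h3 : Real.logb 2 ((2:ℝ)^(n:ℕ) * d)
        = (n:ℝ) + Real.logb 2 d := by
      rw [Real.logb_mul (by positivity) hd0.ne', Real.logb_pow,
        Real.logb_self_eq_one h2, mul_one]
    linarith [h3 ▸ h1]
  -- the sum side
  have hne : Nonempty (Fin S) := ⟨⟨0, hS⟩⟩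
  set T : Fin S → ℝ := fun i => ∑ j, (2:ℝ)^(-(u i + u j)) with hT
  have hT0 : ∀ i, 0 < T i := fun i =>
    Finset.sum_pos (fun j _ => Real.rpow_pos_of_pos two_pos _) Finset.univ_nonempty
  have hsum : ∀ i, ∑ j, (ξ i j)⁻¹ = (2 * d)⁻¹ * (2:ℝ)^((n:ℝ)) * T i := by
    intro i
    have hterm : ∀ j, (ξ i j)⁻¹ = ((2 * d)⁻¹ * (2:ℝ)^((n:ℝ))) * (2:ℝ)^(-(u i + u j)) := by
      intro j
      have h1 : ((2:ℝ) ^ (u i + u j - (n:ℝ)))⁻¹ = (2:ℝ)^((n:ℝ)) * (2:ℝ)^(-(u i + u j)) := by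
        rw [← Real.rpow_neg two_pos.le, ← Real.rpow_add two_pos]
        ring_nf
      rw [hξ i j, hd2, mul_inv, h1]
      ring
    rw [Finset.sum_congr rfl fun j _ => hterm j, ← Finset.mul_sum, hT]
  have hlogT : ∀ i, Real.logb 2 (∑ j, (ξ i j)⁻¹)
      = (-(1 + Real.logb 2 d) + (n:ℝ)) + Real.logb 2 (T i) := by
    intro i
    rw [hsum i, Real.logb_mul (by positivity) (hT0 i).ne',
      Real.logb_mul (by positivity) (by positivity), Real.logb_inv,
      Real.logb_mul two_ne_zero hd0.ne', Real.logb_rpow two_pos (by norm_num),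
      Real.logb_self_eq_one h2]
  have hτ : Real.logb 2 (∏ i, T i) = ∑ i, Real.logb 2 (T i) :=
    Real.logb_prod _ _ (fun i _ => (hT0 i).ne')
  have hS2 : Real.logb 2 ((S:ℝ)/2) = Real.logb 2 (S:ℝ) - 1 := by
    rw [Real.logb_div hS0.ne' two_ne_zero, Real.logb_self_eq_one h2]
  have hsum2 : ∑ i, Real.logb 2 (∑ j, (ξ i j)⁻¹)
      = (S:ℝ) * (-(1 + Real.logb 2 d) + (n:ℝ)) + ∑ i, Real.logb 2 (T i) := by
    rw [Finset.sum_congr rfl fun i _ => hlogT i, Finset.sum_add_distrib,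
      Finset.sum_const, Finset.card_univ, Fintype.card_fin, nsmul_eq_mul]
  rw [hd1, hS2, hsum2, hτ]
  have hmul : (1/(S:ℝ)) * ((S:ℝ) * (-(1 + Real.logb 2 d) + (n:ℝ)) + ∑ i, Real.logb 2 (T i))
      = (-(1 + Real.logb 2 d) + (n:ℝ)) + (1/(S:ℝ)) * ∑ i, Real.logb 2 (T i) := by
    field_simp
  rw [hmul]
  linarith
end

section
/- Let S ≥ 1, let γ : Fin S → ℝ with γ_j > 0 for all j, and let f_{γ_j} be the circularly-symmetric complex Gaussian densities with variances γ_j. Then for every index i, ∫_ℂ f_{γ_i}(y) · log2( (1/S)·Σ_{j} f_{γ_j}(y) ) dy ≤ −log2 π + log2( (1/S)·Σ_{j} (γ_i + γ_j)⁻¹ ). (This is the Jensen-inequality bound (68) in Appendix C of the paper, obtained from concavity of the logarithm and the Gaussian product integral.) -/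
open MeasureTheory Real

/-- The circularly-symmetric complex Gaussian density with variance `γ`. -/
noncomputable def gaussDensity (γ : ℝ) (y : ℂ) : ℝ :=
  (Real.pi * γ)⁻¹ * Real.exp (-(‖y‖) ^ 2 / γ)

lemma intGauss {b : ℝ} (hb : 0 < b) : ∫ v : ℂ, rexp (-b * ‖v‖^2) = π / b := by
  rw [GaussianFourier.integral_rexp_neg_mul_sq_norm hb (V := ℂ)]
  simp [Complex.finrank_real_complex]

lemma integrableGauss {b : ℝ} (hb : 0 < b) : Integrable (fun v : ℂ => rexp (-b * ‖v‖^2)) := by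
  have := (GaussianFourier.integrable_cexp_neg_mul_sq_norm_add (b := (b:ℂ)) (by simpa using hb) 0 ((0:ℂ))).norm
  simpa [Complex.norm_exp, ← Complex.ofReal_pow] using this

lemma integrableGaussMom {b : ℝ} (hb : 0 < b) :
    Integrable (fun v : ℂ => ‖v‖^2 * rexp (-b * ‖v‖^2)) := by
  apply Integrable.mono' ((integrableGauss (half_pos hb)).const_mul (2/b))
  · apply Continuous.aestronglyMeasurable; fun_prop
  · filter_upwards with v
    have t0 : (0:ℝ) ≤ ‖v‖^2 := by positivity
    set t := ‖v‖^2 with ht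
    rw [Real.norm_of_nonneg (by positivity)]
    have key : b/2 * t ≤ rexp (b/2 * t) := by
      have := Real.add_one_le_exp (b/2*t); linarith
    have h2 : t ≤ 2/b * rexp (b/2*t) := by
      rw [div_mul_eq_mul_div, le_div_iff₀ hb]; nlinarith
    calc t * rexp (-b*t) ≤ (2/b * rexp (b/2*t)) * rexp (-b*t) := by
          apply mul_le_mul_of_nonneg_right h2 (Real.exp_pos _).le
      _ = 2/b * rexp (-(b/2)*t) := by
          rw [mul_assoc, ← Real.exp_add]; ring_nf

lemma gd_eq (a : ℝ) : gaussDensity a = fun y : ℂ => (π * a)⁻¹ * rexp (-(a⁻¹) * ‖y‖^2) := by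
  funext y
  rw [gaussDensity]
  ring_nf

lemma gd_pos {a : ℝ} (ha : 0 < a) (y : ℂ) : 0 < gaussDensity a y := by
  rw [gd_eq]
  have := Real.pi_pos
  positivity

lemma gd_cont (a : ℝ) : Continuous (gaussDensity a) := by
  rw [gd_eq]; fun_prop

lemma integrable_gd {a : ℝ} (ha : 0 < a) : Integrable (gaussDensity a) := by
  rw [gd_eq]
  exact (integrableGauss (inv_pos.2 ha)).const_mul _

lemma int_gd {a : ℝ} (ha : 0 < a) : ∫ y : ℂ, gaussDensity a y = 1 := by
  simp only [gd_eq]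
  rw [integral_const_mul, intGauss (inv_pos.2 ha)]
  have := Real.pi_ne_zero
  field_simp

lemma gd_mul_eq {a b : ℝ} (y : ℂ) :
    gaussDensity a y * gaussDensity b y
      = ((π*a)⁻¹ * (π*b)⁻¹) * rexp (-(a⁻¹ + b⁻¹) * ‖y‖^2) := by
  simp only [gd_eq]
  rw [show ((π*a)⁻¹ * rexp (-(a⁻¹) * ‖y‖^2)) * ((π*b)⁻¹ * rexp (-(b⁻¹) * ‖y‖^2))
      = ((π*a)⁻¹ * (π*b)⁻¹) * (rexp (-(a⁻¹) * ‖y‖^2) * rexp (-(b⁻¹) * ‖y‖^2)) by ring,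
    ← Real.exp_add]
  ring_nf

lemma integrable_gd_mul {a b : ℝ} (ha : 0 < a) (hb : 0 < b) :
    Integrable (fun y : ℂ => gaussDensity a y * gaussDensity b y) := by
  simp only [gd_mul_eq]
  exact (integrableGauss (by positivity)).const_mul _

lemma int_gd_mul {a b : ℝ} (ha : 0 < a) (hb : 0 < b) :
    ∫ y : ℂ, gaussDensity a y * gaussDensity b y = (π * (a+b))⁻¹ := by
  simp only [gd_mul_eq]
  rw [integral_const_mul, intGauss (by positivity)]
  have h1 : a⁻¹ + b⁻¹ = (a+b)/(a*b) := by field_simp; ring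
  rw [h1]
  have := Real.pi_ne_zero
  have hab : a + b ≠ 0 := by positivity
  field_simp

lemma integrable_gd_normsq {a : ℝ} (ha : 0 < a) :
    Integrable (fun y : ℂ => gaussDensity a y * ‖y‖^2) := by
  have h : (fun y : ℂ => gaussDensity a y * ‖y‖^2)
      = fun y => (π*a)⁻¹ * (‖y‖^2 * rexp (-(a⁻¹) * ‖y‖^2)) := by
    funext y; rw [gd_eq]; ring
  rw [h]
  exact (integrableGaussMom (inv_pos.2 ha)).const_mul _

lemma logb_tangent {x c : ℝ} (hx : 0 < x) (hc : 0 < c) :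
    Real.logb 2 x ≤ Real.logb 2 c + (x - c)/(c * Real.log 2) := by
  have hl2 : 0 < Real.log 2 := Real.log_pos one_lt_two
  have h1 : Real.log x - Real.log c ≤ (x - c)/c := by
    have := Real.log_le_sub_one_of_pos (show 0 < x/c by positivity)
    rw [Real.log_div hx.ne' hc.ne'] at this
    have h2 : x/c - 1 = (x - c)/c := by field_simp
    linarith
  have h3 : Real.logb 2 x - Real.logb 2 c ≤ (x - c)/(c*Real.log 2) := by
    rw [Real.logb, Real.logb, ← sub_div, ← div_div]
    gcongr
  linarith

/-- Jensen bound (68):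
`∫ f_{γ_i}·log2((1/S)·Σ_j f_{γ_j}) ≤ −log2 π + log2((1/S)·Σ_j (γ_i+γ_j)⁻¹)`. -/
theorem stmt14 (S : ℕ) (hS : 1 ≤ S) (γ : Fin S → ℝ) (hγ : ∀ j, 0 < γ j) (i : Fin S) :
    ∫ y : ℂ, gaussDensity (γ i) y * Real.logb 2 ((1 / (S : ℝ)) * ∑ j, gaussDensity (γ j) y)
      ≤ - Real.logb 2 Real.pi + Real.logb 2 ((1 / (S : ℝ)) * ∑ j, (γ i + γ j)⁻¹) := by
  have hS0 : (0:ℝ) < (S:ℝ) := by exact_mod_cast Nat.lt_of_lt_of_le Nat.zero_lt_one hS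
  have hl2 : 0 < Real.log 2 := Real.log_pos one_lt_two
  have hpi := Real.pi_pos
  have hne : Nonempty (Fin S) := ⟨i⟩
  set g : ℂ → ℝ := fun y => (1 / (S : ℝ)) * ∑ j, gaussDensity (γ j) y with hg
  have hgpos : ∀ y, 0 < g y := by
    intro y
    apply mul_pos (by positivity)
    exact Finset.sum_pos (fun j _ => gd_pos (hγ j) y) Finset.univ_nonempty
  set c : ℝ := (1 / (S : ℝ)) * ∑ j, (π * (γ i + γ j))⁻¹ with hcdef
  have hc : 0 < c := by
    apply mul_pos (by positivity)
    apply Finset.sum_pos (fun j _ => ?_) Finset.univ_nonempty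
    have := hγ i; have := hγ j; positivity
  have hIj : ∀ j, Integrable (fun y : ℂ => gaussDensity (γ i) y * gaussDensity (γ j) y) :=
    fun j => integrable_gd_mul (hγ i) (hγ j)
  have hfg_eq : (fun y : ℂ => gaussDensity (γ i) y * g y)
      = fun y => (1/(S:ℝ)) * ∑ j, gaussDensity (γ i) y * gaussDensity (γ j) y := by
    funext y
    simp only [hg, Finset.mul_sum]
    exact Finset.sum_congr rfl fun j _ => by ring
  have hIfg : Integrable (fun y : ℂ => gaussDensity (γ i) y * g y) := by
    rw [hfg_eq]
    exact (integrable_finset_sum _ (fun j _ => hIj j)).const_mul _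
  have hintfg : ∫ y : ℂ, gaussDensity (γ i) y * g y = c := by
    rw [hfg_eq, integral_const_mul, integral_finset_sum _ (fun j _ => hIj j), hcdef]
    congr 1
    exact Finset.sum_congr rfl (fun j _ => int_gd_mul (hγ i) (hγ j))
  -- continuity of g and of the integrand
  have hgc : Continuous g := by
    rw [hg]
    exact continuous_const.mul (continuous_finset_sum _ fun j _ => gd_cont (γ j))
  have hlogc : Continuous fun y => Real.logb 2 (g y) := by
    simp only [Real.logb]
    apply Continuous.div_const
    rw [continuous_iff_continuousAt]
    exact fun y => (Real.continuousAt_log (hgpos y).ne').comp hgc.continuousAt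
  -- integrability of the LHS integrand
  set K : ℝ := |Real.log ((1/(S:ℝ)) * ∑ j, (π * γ j)⁻¹)| + Real.log S + |Real.log (π * γ i)|
    with hKdef
  have hlogSnn : 0 ≤ Real.log S := Real.log_nonneg (by exact_mod_cast hS)
  have hlogbound : ∀ y : ℂ, |Real.log (g y)| ≤ K + (γ i)⁻¹ * ‖y‖^2 := by
    intro y
    have ht0 : (0:ℝ) ≤ ‖y‖^2 := by positivity
    have hup : g y ≤ (1/(S:ℝ)) * ∑ j, (π * γ j)⁻¹ := by
      apply mul_le_mul_of_nonneg_left _ (by positivity)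
      apply Finset.sum_le_sum
      intro j _
      rw [gd_eq]
      calc (π * γ j)⁻¹ * rexp (-(γ j)⁻¹ * ‖y‖^2) ≤ (π * γ j)⁻¹ * 1 := by
            apply mul_le_mul_of_nonneg_left _ (by have := hγ j; positivity)
            rw [show (1:ℝ) = rexp 0 by simp]
            apply Real.exp_le_exp.2
            have := hγ j
            have : (0:ℝ) ≤ (γ j)⁻¹ * ‖y‖^2 := by positivity
            linarith
        _ = (π * γ j)⁻¹ := mul_one _
    have hlo : (1/(S:ℝ)) * gaussDensity (γ i) y ≤ g y := by
      apply mul_le_mul_of_nonneg_left _ (by positivity)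
      exact Finset.single_le_sum (fun j _ => (gd_pos (hγ j) y).le) (Finset.mem_univ i)
    rw [abs_le]
    constructor
    · -- lower bound
      have h1 : Real.log ((1/(S:ℝ)) * gaussDensity (γ i) y) ≤ Real.log (g y) :=
        Real.log_le_log (mul_pos (by positivity) (gd_pos (hγ i) y)) hlo
      have h2 : Real.log ((1/(S:ℝ)) * gaussDensity (γ i) y)
          = -Real.log S + (-Real.log (π * γ i) + (-(γ i)⁻¹ * ‖y‖^2)) := by
        rw [gd_eq]
        rw [Real.log_mul (by positivity) (by have := hγ i; positivity),
            Real.log_mul (by have := hγ i; positivity) (Real.exp_pos _).ne',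
            Real.log_exp, one_div, Real.log_inv, Real.log_inv]
      rw [h2] at h1
      rw [hKdef]
      linarith [le_abs_self (Real.log (π * γ i)),
        abs_nonneg (Real.log ((1/(S:ℝ)) * ∑ j, (π * γ j)⁻¹)), h1]
    · -- upper bound
      have h1 : Real.log (g y) ≤ Real.log ((1/(S:ℝ)) * ∑ j, (π * γ j)⁻¹) :=
        Real.log_le_log (hgpos y) hup
      have hnn : (0:ℝ) ≤ (γ i)⁻¹ * ‖y‖^2 := by have := hγ i; positivity
      rw [hKdef]
      linarith [le_abs_self (Real.log ((1/(S:ℝ)) * ∑ j, (π * γ j)⁻¹)),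
        abs_nonneg (Real.log (π * γ i)), h1]
  have hIlhs : Integrable (fun y : ℂ => gaussDensity (γ i) y * Real.logb 2 (g y)) := by
    apply Integrable.mono'
      ((((integrable_gd (hγ i)).const_mul K).add
        ((integrable_gd_normsq (hγ i)).const_mul (γ i)⁻¹)).const_mul (Real.log 2)⁻¹)
    · exact ((gd_cont (γ i)).mul hlogc).aestronglyMeasurable
    · filter_upwards with y
      have hgd := gd_pos (hγ i) y
      rw [Real.norm_eq_abs, abs_mul, abs_of_pos hgd]
      have h1 : |Real.logb 2 (g y)| = |Real.log (g y)| / Real.log 2 := by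
        rw [Real.logb, abs_div, abs_of_pos hl2]
      rw [h1]
      calc gaussDensity (γ i) y * (|Real.log (g y)| / Real.log 2)
          ≤ gaussDensity (γ i) y * ((K + (γ i)⁻¹ * ‖y‖^2) / Real.log 2) := by
            apply mul_le_mul_of_nonneg_left _ hgd.le
            gcongr
            exact hlogbound y
        _ = (Real.log 2)⁻¹ * (K * gaussDensity (γ i) y
              + (γ i)⁻¹ * (gaussDensity (γ i) y * ‖y‖^2)) := by
            field_simp
  -- pointwise tangent bound
  have hpt : (fun y : ℂ => gaussDensity (γ i) y * Real.logb 2 (g y))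
      ≤ fun y => gaussDensity (γ i) y * (Real.logb 2 c + (g y - c)/(c*Real.log 2)) := by
    intro y
    exact mul_le_mul_of_nonneg_left (logb_tangent (hgpos y) hc) (gd_pos (hγ i) y).le
  have hRHSeq : (fun y : ℂ => gaussDensity (γ i) y * (Real.logb 2 c + (g y - c)/(c*Real.log 2)))
      = fun y => (Real.logb 2 c - (Real.log 2)⁻¹) * gaussDensity (γ i) y
          + (c*Real.log 2)⁻¹ * (gaussDensity (γ i) y * g y) := by
    funext y
    field_simp
    ring
  have hIrhs : Integrable (fun y : ℂ =>
      gaussDensity (γ i) y * (Real.logb 2 c + (g y - c)/(c*Real.log 2))) := by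
    rw [hRHSeq]
    exact (((integrable_gd (hγ i)).const_mul _)).add (hIfg.const_mul _)
  have key := integral_mono hIlhs hIrhs hpt
  have hrhsval : ∫ y : ℂ, gaussDensity (γ i) y * (Real.logb 2 c + (g y - c)/(c*Real.log 2))
      = Real.logb 2 c := by
    rw [hRHSeq, integral_add ((integrable_gd (hγ i)).const_mul _) (hIfg.const_mul _),
        integral_const_mul, integral_const_mul, int_gd (hγ i), hintfg]
    field_simp
    ring
  rw [hrhsval] at key
  -- identify logb 2 c with the RHS
  have hT : 0 < (1/(S:ℝ)) * ∑ j, (γ i + γ j)⁻¹ := by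
    apply mul_pos (by positivity)
    apply Finset.sum_pos (fun j _ => ?_) Finset.univ_nonempty
    have := hγ i; have := hγ j; positivity
  have hceq : c = π⁻¹ * ((1/(S:ℝ)) * ∑ j, (γ i + γ j)⁻¹) := by
    rw [hcdef]
    simp only [mul_inv]
    rw [← Finset.mul_sum]
    ring
  rw [hceq, Real.logb_mul (by positivity) hT.ne', Real.logb_inv] at key
  exact key
end

section
/- Let S ≥ 1, let γ : Fin S → ℝ with γ_i > 0 for all i, and let f_{γ_i} be the circularly-symmetric complex Gaussian densities with variances γ_i. Define the mutual information of the spatial-pattern index as I := (1/S)·Σ_{i} ∫_ℂ f_{γ_i}(y) · log2( f_{γ_i}(y) / ((1/S)·Σ_{j} f_{γ_j}(y)) ) dy. Then I ≥ log2(S/e) − (1/S)·Σ_{i} log2( Σ_{j} γ_i/(γ_i + γ_j) ). (This is the lower bound (69) proved in Appendix C of the paper, from which the closed-form SPIM spectral-efficiency approximation of Lemma 2/3 is obtained after bias compensation.) -/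
open MeasureTheory

open Real

namespace Stmt15Aux


lemma intC_gauss {b : ℝ} (hb : 0 < b) :
    Integrable (fun y : ℂ => Real.exp (-b * ‖y‖ ^ 2)) := by
  have h := (GaussianFourier.integrable_cexp_neg_mul_sq_norm_add (V := ℂ)
      (b := (b : ℂ)) (by simpa using hb) 0 0).norm
  refine h.congr (Filter.Eventually.of_forall fun v => ?_)
  simp [Complex.norm_exp, ← Complex.ofReal_pow]

lemma intC_gauss_val {b : ℝ} (hb : 0 < b) :
    ∫ y : ℂ, Real.exp (-b * ‖y‖ ^ 2) = Real.pi / b := by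
  rw [GaussianFourier.integral_rexp_neg_mul_sq_norm hb]
  rw [Complex.finrank_real_complex]
  norm_num

lemma intC_moment_val {b : ℝ} (hb : 0 < b) :
    ∫ y : ℂ, ‖y‖ ^ 2 * Real.exp (-b * ‖y‖ ^ 2) = Real.pi / b ^ 2 := by
  have h := Complex.integral_rpow_mul_exp_neg_mul_rpow (p := 2) (q := 2)
    (by norm_num) (by norm_num) hb
  have e2 : ∀ x : ℝ, 0 ≤ x → x ^ (2 : ℝ) = x ^ 2 := fun x hx => by
    rw [show (2:ℝ) = ((2:ℕ):ℝ) by norm_num, Real.rpow_natCast]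
  rw [show ∫ y : ℂ, ‖y‖ ^ 2 * Real.exp (-b * ‖y‖ ^ 2)
      = ∫ y : ℂ, ‖y‖ ^ (2:ℝ) * Real.exp (-b * ‖y‖ ^ (2:ℝ)) by
    congr 1; funext y; rw [e2 _ (norm_nonneg y)], h]
  rw [show (-(2 + 2) / 2 : ℝ) = -2 by norm_num,
    Real.rpow_neg hb.le, e2 _ hb.le,
    show ((2:ℝ) + 2) / 2 = 1 + 1 by norm_num,
    Real.Gamma_add_one one_ne_zero, Real.Gamma_one]
  ring

lemma intC_moment {b : ℝ} (hb : 0 < b) :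
    Integrable (fun y : ℂ => ‖y‖ ^ 2 * Real.exp (-b * ‖y‖ ^ 2)) := by
  have hb2 : 0 < b / 2 := by linarith
  refine (((intC_gauss hb2).const_mul (2 / b)).mono'
    (Continuous.aestronglyMeasurable (by continuity))
    (Filter.Eventually.of_forall fun y => ?_))
  have ht : (0:ℝ) ≤ ‖y‖ ^ 2 := by positivity
  set t := ‖y‖ ^ 2 with htdef
  rw [Real.norm_eq_abs, abs_of_nonneg (by positivity)]
  have key : b / 2 * t * Real.exp (-(b / 2 * t)) ≤ 1 := by
    have h1 : b / 2 * t ≤ Real.exp (b / 2 * t) :=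
      le_trans (by linarith) (Real.add_one_le_exp _)
    calc b / 2 * t * Real.exp (-(b / 2 * t))
        ≤ Real.exp (b / 2 * t) * Real.exp (-(b / 2 * t)) := by
          apply mul_le_mul_of_nonneg_right h1 (Real.exp_nonneg _)
      _ = 1 := by rw [← Real.exp_add]; simp
  have : t * Real.exp (-b * t) = (2 / b) * (b / 2 * t * Real.exp (-(b/2*t))) * Real.exp (-(b/2) * t) := by
    rw [show (-b * t) = -(b/2*t) + (-(b/2)*t) by ring, Real.exp_add]
    field_simp
  rw [this]
  calc (2 / b) * (b / 2 * t * Real.exp (-(b/2*t))) * Real.exp (-(b/2) * t)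
      ≤ (2 / b) * 1 * Real.exp (-(b/2) * t) := by
        apply mul_le_mul_of_nonneg_right _ (Real.exp_nonneg _)
        exact mul_le_mul_of_nonneg_left key (by positivity)
    _ = 2 / b * Real.exp (-(b/2) * t) := by ring

lemma gauss_eq (γ : ℝ) (y : ℂ) :
    gaussDensity γ y = (Real.pi * γ)⁻¹ * Real.exp (-γ⁻¹ * ‖y‖ ^ 2) := by
  rw [gaussDensity]
  congr 2
  ring

lemma gauss_pos {γ : ℝ} (hγ : 0 < γ) (y : ℂ) : 0 < gaussDensity γ y := by
  rw [gauss_eq]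
  have := Real.pi_pos
  positivity

lemma gauss_cont (γ : ℝ) : Continuous (gaussDensity γ) := by
  simp only [funext (gauss_eq γ)]
  fun_prop

lemma gauss_integrable {γ : ℝ} (hγ : 0 < γ) : Integrable (gaussDensity γ) := by
  simp only [funext (gauss_eq γ)]
  exact (intC_gauss (by positivity)).const_mul _

lemma gauss_integral {γ : ℝ} (hγ : 0 < γ) : ∫ y : ℂ, gaussDensity γ y = 1 := by
  simp only [funext (gauss_eq γ)]
  rw [integral_const_mul, intC_gauss_val (by positivity)]
  have := Real.pi_pos
  field_simp

lemma gauss_moment_integrable {γ : ℝ} (hγ : 0 < γ) :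
    Integrable (fun y : ℂ => gaussDensity γ y * ‖y‖ ^ 2) := by
  have : (fun y : ℂ => gaussDensity γ y * ‖y‖ ^ 2)
      = fun y : ℂ => (Real.pi * γ)⁻¹ * (‖y‖ ^ 2 * Real.exp (-γ⁻¹ * ‖y‖ ^ 2)) := by
    funext y; rw [gauss_eq]; ring
  rw [this]
  exact (intC_moment (by positivity)).const_mul _

lemma gauss_moment_integral {γ : ℝ} (hγ : 0 < γ) :
    ∫ y : ℂ, gaussDensity γ y * ‖y‖ ^ 2 = γ := by
  have : (fun y : ℂ => gaussDensity γ y * ‖y‖ ^ 2)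
      = fun y : ℂ => (Real.pi * γ)⁻¹ * (‖y‖ ^ 2 * Real.exp (-γ⁻¹ * ‖y‖ ^ 2)) := by
    funext y; rw [gauss_eq]; ring
  rw [this, integral_const_mul, intC_moment_val (by positivity)]
  have := Real.pi_pos
  field_simp

lemma gauss_mul_gauss {γ₁ γ₂ : ℝ} (h₁ : 0 < γ₁) (h₂ : 0 < γ₂) (y : ℂ) :
    gaussDensity γ₁ y * gaussDensity γ₂ y
      = ((Real.pi * γ₁)⁻¹ * (Real.pi * γ₂)⁻¹) * Real.exp (-(γ₁⁻¹ + γ₂⁻¹) * ‖y‖ ^ 2) := by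
  rw [gauss_eq, gauss_eq]
  rw [show (-(γ₁⁻¹ + γ₂⁻¹) * ‖y‖ ^ 2) = (-γ₁⁻¹ * ‖y‖ ^ 2) + (-γ₂⁻¹ * ‖y‖ ^ 2) by ring,
    Real.exp_add]
  ring

lemma gauss_prod_integrable {γ₁ γ₂ : ℝ} (h₁ : 0 < γ₁) (h₂ : 0 < γ₂) :
    Integrable (fun y : ℂ => gaussDensity γ₁ y * gaussDensity γ₂ y) := by
  simp only [funext (gauss_mul_gauss h₁ h₂)]
  exact (intC_gauss (by positivity)).const_mul _

lemma gauss_prod_integral {γ₁ γ₂ : ℝ} (h₁ : 0 < γ₁) (h₂ : 0 < γ₂) :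
    ∫ y : ℂ, gaussDensity γ₁ y * gaussDensity γ₂ y = (Real.pi * (γ₁ + γ₂))⁻¹ := by
  simp only [funext (gauss_mul_gauss h₁ h₂)]
  rw [integral_const_mul, intC_gauss_val (by positivity)]
  have := Real.pi_pos
  rw [div_eq_mul_inv]
  rw [show (γ₁⁻¹ + γ₂⁻¹) = (γ₁ + γ₂) / (γ₁ * γ₂) by field_simp; ring]
  field_simp

lemma log_gauss {γ : ℝ} (hγ : 0 < γ) (y : ℂ) :
    Real.log (gaussDensity γ y) = -Real.log (Real.pi * γ) - γ⁻¹ * ‖y‖ ^ 2 := by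
  have := Real.pi_pos
  rw [gauss_eq, Real.log_mul (by positivity) (Real.exp_ne_zero _), Real.log_inv,
    Real.log_exp]
  ring

lemma gauss_log_gauss_integrable {γ : ℝ} (hγ : 0 < γ) :
    Integrable (fun y : ℂ => gaussDensity γ y * Real.log (gaussDensity γ y)) := by
  have : (fun y : ℂ => gaussDensity γ y * Real.log (gaussDensity γ y))
      = fun y : ℂ => (-Real.log (Real.pi * γ)) * gaussDensity γ y
          - γ⁻¹ * (gaussDensity γ y * ‖y‖ ^ 2) := by
    funext y; rw [log_gauss hγ]; ring
  rw [this]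
  exact (((gauss_integrable hγ).const_mul _).sub ((gauss_moment_integrable hγ).const_mul _))

lemma gauss_log_gauss_integral {γ : ℝ} (hγ : 0 < γ) :
    ∫ y : ℂ, gaussDensity γ y * Real.log (gaussDensity γ y)
      = -Real.log (Real.pi * γ) - 1 := by
  have : (fun y : ℂ => gaussDensity γ y * Real.log (gaussDensity γ y))
      = fun y : ℂ => (-Real.log (Real.pi * γ)) * gaussDensity γ y
          - γ⁻¹ * (gaussDensity γ y * ‖y‖ ^ 2) := by
    funext y; rw [log_gauss hγ]; ring
  rw [this, integral_sub (((gauss_integrable hγ)).const_mul _)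
      ((gauss_moment_integrable hγ).const_mul _),
    integral_const_mul, integral_const_mul, gauss_integral hγ, gauss_moment_integral hγ]
  field_simp


end Stmt15Aux

open Stmt15Aux

/-- lower bound (69): the mutual information of the spatial-pattern
index is at least `log2(S/e) − (1/S)·Σ_i log2(Σ_j γ_i/(γ_i+γ_j))`. -/
theorem stmt15 (S : ℕ) (hS : 1 ≤ S) (γ : Fin S → ℝ) (hγ : ∀ i, 0 < γ i) :
    (1 / (S : ℝ)) * ∑ i, ∫ y : ℂ,
        gaussDensity (γ i) y *
          Real.logb 2 (gaussDensity (γ i) y / ((1 / (S : ℝ)) * ∑ j, gaussDensity (γ j) y))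
      ≥ Real.logb 2 ((S : ℝ) / Real.exp 1)
        - (1 / (S : ℝ)) * ∑ i, Real.logb 2 (∑ j, γ i / (γ i + γ j)) := by
  have hπ := Real.pi_pos
  have hS0 : (0:ℝ) < S := by exact_mod_cast Nat.lt_of_lt_of_le Nat.zero_lt_one hS
  have hS1 : (1:ℝ) ≤ S := by exact_mod_cast hS
  haveI : Nonempty (Fin S) := ⟨⟨0, hS⟩⟩
  set avg : ℂ → ℝ := fun y => (1 / (S : ℝ)) * ∑ j, gaussDensity (γ j) y with havg
  have avg_pos : ∀ y, 0 < avg y := by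
    intro y
    apply mul_pos (by positivity)
    exact Finset.sum_pos (fun j _ => gauss_pos (hγ j) y) Finset.univ_nonempty
  have avg_cont : Continuous avg :=
    continuous_const.mul (continuous_finset_sum _ (fun j _ => gauss_cont (γ j)))
  have avg_lower : ∀ i y, (1 / (S:ℝ)) * gaussDensity (γ i) y ≤ avg y := by
    intro i y
    apply mul_le_mul_of_nonneg_left _ (by positivity)
    exact Finset.single_le_sum (fun j _ => (gauss_pos (hγ j) y).le) (Finset.mem_univ i)
  set U : ℝ := (1 / (S:ℝ)) * ∑ j, (Real.pi * γ j)⁻¹ with hU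
  have hU0 : 0 < U := by
    apply mul_pos (by positivity)
    exact Finset.sum_pos (fun j _ => by have := hγ j; positivity) Finset.univ_nonempty
  have avg_upper : ∀ y, avg y ≤ U := by
    intro y
    apply mul_le_mul_of_nonneg_left _ (by positivity)
    apply Finset.sum_le_sum
    intro j _
    rw [gauss_eq]
    nth_rewrite 2 [show (Real.pi * γ j)⁻¹ = (Real.pi * γ j)⁻¹ * 1 by ring]
    apply mul_le_mul_of_nonneg_left _ (by have := hγ j; positivity)
    apply Real.exp_le_one_iff.mpr
    have h1 := hγ j
    have : (0:ℝ) ≤ (γ j)⁻¹ * ‖y‖ ^ 2 := by positivity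
    linarith
  -- key per-index bound
  have key : ∀ i, Real.logb 2 ((S : ℝ) / Real.exp 1)
      - Real.logb 2 (∑ j, γ i / (γ i + γ j))
      ≤ ∫ y : ℂ, gaussDensity (γ i) y * Real.logb 2 (gaussDensity (γ i) y / avg y) := by
    intro i
    have hγi := hγ i
    set f : ℂ → ℝ := gaussDensity (γ i) with hf
    set T : ℝ := ∑ j, γ i / (γ i + γ j) with hT
    have hT0 : 0 < T :=
      Finset.sum_pos (fun j _ => by have := hγ j; positivity) Finset.univ_nonempty
    set a : ℝ := (1 / (S:ℝ)) * ∑ j, (Real.pi * (γ i + γ j))⁻¹ with ha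
    have ha0 : 0 < a := mul_pos (by positivity)
      (Finset.sum_pos (fun j _ => by have := hγ j; positivity) Finset.univ_nonempty)
    have hfavg_eq : (fun y : ℂ => f y * avg y)
        = fun y => (1 / (S:ℝ)) * ∑ j, f y * gaussDensity (γ j) y := by
      funext y
      simp only [havg, Finset.mul_sum]
      exact Finset.sum_congr rfl fun j _ => by ring
    have hfavg_int : Integrable (fun y : ℂ => f y * avg y) := by
      rw [hfavg_eq]
      exact (integrable_finset_sum _ (fun j _ => gauss_prod_integrable hγi (hγ j))).const_mul _
    have hfavg_val : ∫ y : ℂ, f y * avg y = a := by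
      rw [hfavg_eq]
      rw [integral_const_mul, integral_finset_sum _ (fun j _ => gauss_prod_integrable hγi (hγ j)),
        ha]
      congr 1
      exact Finset.sum_congr rfl fun j _ => gauss_prod_integral hγi (hγ j)
    set A : ℝ := |Real.log U| + Real.log S + |Real.log (Real.pi * γ i)| with hA
    have habs : ∀ y : ℂ, |Real.log (avg y)| ≤ A + (γ i)⁻¹ * ‖y‖^2 := by
      intro y
      have hb0 : (0:ℝ) ≤ (γ i)⁻¹ * ‖y‖^2 := by positivity
      have hlogS : 0 ≤ Real.log S := Real.log_nonneg hS1
      refine abs_le.mpr ⟨?_, ?_⟩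
      · have hl : Real.log ((1/(S:ℝ)) * f y) ≤ Real.log (avg y) :=
          Real.log_le_log (mul_pos (by positivity) (gauss_pos hγi y)) (avg_lower i y)
        rw [Real.log_mul (by positivity) (gauss_pos hγi y).ne'] at hl
        rw [one_div, Real.log_inv] at hl
        rw [log_gauss hγi] at hl
        have := le_abs_self (Real.log (Real.pi * γ i))
        have := abs_nonneg (Real.log U)
        simp only [hA]
        linarith
      · have h1 : Real.log (avg y) ≤ |Real.log U| :=
          le_trans (Real.log_le_log (avg_pos y) (avg_upper y)) (le_abs_self _)
        have := abs_nonneg (Real.log (Real.pi * γ i))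
        simp only [hA]
        linarith
    have hflogavg_int : Integrable (fun y : ℂ => f y * Real.log (avg y)) := by
      refine Integrable.mono'
        (((gauss_integrable hγi).const_mul A).add
          ((gauss_moment_integrable hγi).const_mul (γ i)⁻¹)) ?_ ?_
      · exact ((gauss_cont (γ i)).mul
          (avg_cont.log (fun y => (avg_pos y).ne'))).aestronglyMeasurable
      · refine Filter.Eventually.of_forall fun y => ?_
        rw [Real.norm_eq_abs, abs_mul, abs_of_pos (gauss_pos hγi y)]
        calc f y * |Real.log (avg y)| ≤ f y * (A + (γ i)⁻¹ * ‖y‖^2) :=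
              mul_le_mul_of_nonneg_left (habs y) (gauss_pos hγi y).le
          _ = A * f y + (γ i)⁻¹ * (f y * ‖y‖^2) := by ring
    have jensen : ∫ y : ℂ, f y * Real.log (avg y) ≤ Real.log a := by
      have hrhs_int : Integrable
          (fun y : ℂ => a⁻¹ * (f y * avg y) + (Real.log a - 1) * f y) :=
        (hfavg_int.const_mul _).add ((gauss_integrable hγi).const_mul _)
      have hpt : ∀ y : ℂ, f y * Real.log (avg y)
          ≤ a⁻¹ * (f y * avg y) + (Real.log a - 1) * f y := by
        intro y
        have h1 : Real.log (avg y) ≤ avg y / a - 1 + Real.log a := by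
          have h2 := Real.log_le_sub_one_of_pos (div_pos (avg_pos y) ha0)
          rw [Real.log_div (avg_pos y).ne' ha0.ne'] at h2
          linarith
        calc f y * Real.log (avg y) ≤ f y * (avg y / a - 1 + Real.log a) :=
              mul_le_mul_of_nonneg_left h1 (gauss_pos hγi y).le
          _ = a⁻¹ * (f y * avg y) + (Real.log a - 1) * f y := by
              field_simp
              ring
      have hm := integral_mono hflogavg_int hrhs_int hpt
      rw [integral_add (hfavg_int.const_mul _) ((gauss_integrable hγi).const_mul _),
        integral_const_mul, integral_const_mul, hfavg_val, gauss_integral hγi,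
        inv_mul_cancel₀ ha0.ne', mul_one] at hm
      linarith
    have hmain_eq : (fun y : ℂ => f y * Real.logb 2 (f y / avg y))
        = fun y => (f y * Real.log (f y) - f y * Real.log (avg y)) * (Real.log 2)⁻¹ := by
      funext y
      simp only [Real.logb]
      rw [Real.log_div (gauss_pos hγi y).ne' (avg_pos y).ne']
      ring
    have hint_val : ∫ y : ℂ, f y * Real.logb 2 (f y / avg y)
        = ((∫ y : ℂ, f y * Real.log (f y)) - ∫ y : ℂ, f y * Real.log (avg y))
            * (Real.log 2)⁻¹ := by
      rw [hmain_eq, integral_mul_const,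
        integral_sub (gauss_log_gauss_integrable hγi) hflogavg_int]
    rw [hint_val, hf, gauss_log_gauss_integral hγi]
    have haT : Real.log a = -Real.log S - Real.log (Real.pi * γ i) + Real.log T := by
      have he : a = (1/(S:ℝ)) * ((Real.pi * γ i)⁻¹ * T) := by
        have hs : ∑ j, (Real.pi * (γ i + γ j))⁻¹
            = (Real.pi * γ i)⁻¹ * ∑ j, γ i / (γ i + γ j) := by
          rw [Finset.mul_sum]
          refine Finset.sum_congr rfl fun j _ => ?_
          have h1 := hγ i; have h2 := hγ j
          field_simp
        rw [ha, hT, hs]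
      rw [he, Real.log_mul (by positivity) (by positivity),
        Real.log_mul (by positivity) hT0.ne', one_div, Real.log_inv, Real.log_inv]
      ring
    have hgoal_eq : Real.logb 2 ((S : ℝ) / Real.exp 1) - Real.logb 2 T
        = (-Real.log (Real.pi * γ i) - 1 - Real.log a) * (Real.log 2)⁻¹ := by
      simp only [Real.logb, Real.log_div hS0.ne' (Real.exp_ne_zero 1), Real.log_exp, haT]
      ring
    rw [hgoal_eq]
    have hle : -Real.log (Real.pi * γ i) - 1 - Real.log a
        ≤ -Real.log (Real.pi * γ i) - 1 - ∫ y : ℂ, f y * Real.log (avg y) := by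
      linarith
    have hlog2 : (0:ℝ) ≤ (Real.log 2)⁻¹ := by
      have := Real.log_pos one_lt_two
      positivity
    exact mul_le_mul_of_nonneg_right hle hlog2
  -- conclude
  have hsum : ∑ i, (Real.logb 2 ((S : ℝ) / Real.exp 1)
        - Real.logb 2 (∑ j, γ i / (γ i + γ j)))
      ≤ ∑ i, ∫ y : ℂ, gaussDensity (γ i) y
          * Real.logb 2 (gaussDensity (γ i) y / avg y) :=
    Finset.sum_le_sum fun i _ => key i
  have := mul_le_mul_of_nonneg_left hsum (by positivity : (0:ℝ) ≤ 1 / (S:ℝ))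
  calc Real.logb 2 ((S : ℝ) / Real.exp 1)
        - (1 / (S : ℝ)) * ∑ i, Real.logb 2 (∑ j, γ i / (γ i + γ j))
      = (1 / (S:ℝ)) * ∑ i, (Real.logb 2 ((S : ℝ) / Real.exp 1)
            - Real.logb 2 (∑ j, γ i / (γ i + γ j))) := by
        rw [Finset.sum_sub_distrib, Finset.sum_const, Finset.card_univ, Fintype.card_fin]
        field_simp
        ring
    _ ≤ (1 / (S:ℝ)) * ∑ i, ∫ y : ℂ, gaussDensity (γ i) y
          * Real.logb 2 (gaussDensity (γ i) y / avg y) := this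
end

section
/- Let S ≥ 1 and γ > 0, and suppose γ_i = γ for every i ∈ Fin S. Then the mutual information I := (1/S)·Σ_{i} ∫_ℂ f_{γ_i}(y) · log2( f_{γ_i}(y) / ((1/S)·Σ_{j} f_{γ_j}(y)) ) dy equals 0, while the lower-bound expression log2(S/e) − (1/S)·Σ_{i} log2( Σ_{j} γ_i/(γ_i + γ_j) ) equals 1 − log2 e. (This quantifies the asymptotic bias of the bound (69) claimed in Appendix C of the paper: in the zero-SINR regime where all γ_i coincide, the true mutual information is 0 whereas the bound evaluates to 1 − log2 e.) -/
open MeasureTheory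

/-- asymptotic bias of the bound (69): when all `γ_i` coincide, the
true mutual information is `0` while the lower-bound expression is `1 − log2 e`. -/
theorem stmt17 (S : ℕ) (hS : 1 ≤ S) (γ₀ : ℝ) (hγ₀ : 0 < γ₀)
    (γ : Fin S → ℝ) (hγ : ∀ i, γ i = γ₀) :
    ((1 / (S : ℝ)) * ∑ i, ∫ y : ℂ,
        gaussDensity (γ i) y *
          Real.logb 2 (gaussDensity (γ i) y / ((1 / (S : ℝ)) * ∑ j, gaussDensity (γ j) y)) = 0) ∧
    (Real.logb 2 ((S : ℝ) / Real.exp 1)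
        - (1 / (S : ℝ)) * ∑ i, Real.logb 2 (∑ j, γ i / (γ i + γ j))
      = 1 - Real.logb 2 (Real.exp 1)) := by
  have hS0 : (0 : ℝ) < (S : ℝ) := by exact_mod_cast Nat.lt_of_lt_of_le Nat.zero_lt_one hS
  have hSne : (S : ℝ) ≠ 0 := ne_of_gt hS0
  constructor
  · have h1 : ∀ i : Fin S, (∫ y : ℂ,
        gaussDensity (γ i) y *
          Real.logb 2 (gaussDensity (γ i) y / ((1 / (S : ℝ)) * ∑ j, gaussDensity (γ j) y))) = 0 := by
      intro i
      have : ∀ y : ℂ, gaussDensity (γ i) y *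
          Real.logb 2 (gaussDensity (γ i) y / ((1 / (S : ℝ)) * ∑ j, gaussDensity (γ j) y)) = 0 := by
        intro y
        have hpos : 0 < gaussDensity γ₀ y := by
          unfold gaussDensity
          positivity
        have hsum : (∑ j : Fin S, gaussDensity (γ j) y) = (S : ℝ) * gaussDensity γ₀ y := by
          simp [hγ, Finset.sum_const, mul_comm]
        rw [hγ i, hsum]
        have : (1 / (S : ℝ)) * ((S : ℝ) * gaussDensity γ₀ y) = gaussDensity γ₀ y := by
          field_simp
        rw [this, div_self (ne_of_gt hpos)]
        simp
      simp only [one_div] at this ⊢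
      simp [this]
    rw [Finset.sum_eq_zero (fun i _ => h1 i), mul_zero]
  · have hterm : ∀ i : Fin S, (∑ j : Fin S, γ i / (γ i + γ j)) = (S : ℝ) / 2 := by
      intro i
      have : ∀ j : Fin S, γ i / (γ i + γ j) = 1 / 2 := by
        intro j
        rw [hγ i, hγ j]
        rw [div_eq_div_iff (by linarith) (by norm_num)]
        ring
      rw [Finset.sum_congr rfl (fun j _ => this j)]
      simp
      ring
    have hsum : (1 / (S : ℝ)) * ∑ i, Real.logb 2 (∑ j, γ i / (γ i + γ j))
        = Real.logb 2 ((S : ℝ) / 2) := by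
      rw [Finset.sum_congr rfl (fun i _ => by rw [hterm i])]
      simp [Finset.sum_const]
      field_simp
    rw [hsum, Real.logb_div hSne (Real.exp_ne_zero 1),
        Real.logb_div hSne (by norm_num), Real.logb_self_eq_one (by norm_num : (1:ℝ) < 2)]
    ring
end
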